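/- Let X be a compact Hausdorff space, E a Banach space over 𝕂 ∈ {ℝ, ℂ}, and A a closed 𝕂-linear subspace of C(X,E). Let x ∈ Θ(A) and f ∈ A with ‖f‖_∞ = 1 and f(x) = 0. Then for every u ∈ S(E) and every r with 0 < r < 1 there exists g ∈ V^A_{x,{u}} such that rf + g ∈ V^A_{x,{u}}; that is, there exists g ∈ A with g(x) = u, ‖g‖_∞ = 1 and ‖rf + g‖_∞ = 1. -/

import Mathlib

open Set Metric

variable {𝕂 : Type*} [RCLike 𝕂]
variable {X : Type*} [TopologicalSpace X] [CompactSpace X] [T2Space X]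
variable {E : Type*} [NormedAddCommGroup E] [NormedSpace ℝ E] [NormedSpace 𝕂 E]
  [IsScalarTower ℝ 𝕂 E] [CompleteSpace E]

/-- The set `V^A_{x,K} = {f ∈ S(A) : f(x) ∈ K}`. -/
def Vset (A : Subspace 𝕂 C(X, E)) (x : X) (K : Set E) : Set C(X, E) :=
  {f | f ∈ A ∧ ‖f‖ = 1 ∧ f x ∈ K}

/-- The set `Θ(A)` of strong boundary points of a set `A` of functions in `C(X,E)`. -/
def strongBoundaryPoints (A : Set C(X, E)) : Set X :=
  {x | ∀ U ∈ nhds x, ∀ ε : ℝ, 0 < ε → ∀ u : E, ‖u‖ = 1 →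
    ∃ f ∈ A, ‖f‖ = 1 ∧ f x = u ∧ ∀ y, y ∉ U → ‖f y‖ < ε}

/-! For each `n` pick `hₙ ∈ A` with `hₙ x = u`, `‖hₙ‖ = 1` and `‖hₙ y‖ < 1 - r` for `y` outside
`Uₙ = {‖f‖ < 2⁻⁽ⁿ⁺¹⁾}`, and put `g = ∑ 2⁻⁽ⁿ⁺¹⁾ hₙ`, which lies in `A` because `A` is closed.
If `2⁻⁽ᴺ⁺¹⁾ ≤ ‖f y‖ ≤ 2⁻ᴺ`, then every `hₙ` with `n ≥ N` is small at `y`, so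
`‖g y‖ ≤ 1 - r 2⁻ᴺ ≤ 1 - r ‖f y‖`, i.e. `‖r f + g‖ ≤ 1`. -/

lemma hasSum_half_pow_succ : HasSum (fun n : ℕ => (1 / 2 : ℝ) ^ (n + 1)) 1 := by
  convert hasSum_geometric_two' 1 using 2 with n
  rw [pow_succ, div_pow, one_pow]
  ring

lemma sum_range_half_pow_succ (N : ℕ) :
    ∑ n ∈ Finset.range N, (1 / 2 : ℝ) ^ (n + 1) = 1 - (1 / 2) ^ N := by
  induction N with
  | zero => simp
  | succ N ih => rw [Finset.sum_range_succ, ih]; ring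

lemma norm_tsum_half_pow_smul_le {V : Type*} [NormedAddCommGroup V] [NormedSpace ℝ V]
    [CompleteSpace V] {c : ℕ → V} {r : ℝ} {N : ℕ} (hc : ∀ n, ‖c n‖ ≤ 1)
    (hcN : ∀ n, N ≤ n → ‖c n‖ ≤ 1 - r) :
    ‖∑' n, (1 / 2 : ℝ) ^ (n + 1) • c n‖ ≤ 1 - r * (1 / 2) ^ N := by
  have hterm : ∀ n, ‖(1 / 2 : ℝ) ^ (n + 1) • c n‖ ≤ (1 / 2) ^ (n + 1) * ‖c n‖ := fun n => by
    rw [norm_smul, Real.norm_of_nonneg (by positivity)]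
  have hsum : Summable fun n => (1 / 2 : ℝ) ^ (n + 1) • c n :=
    .of_norm_bounded hasSum_half_pow_succ.summable fun n =>
      (hterm n).trans (mul_le_of_le_one_right (by positivity) (hc n))
  have htail : HasSum (fun n => (1 - r) * (1 / 2) ^ N * (1 / 2 : ℝ) ^ (n + 1))
      ((1 - r) * (1 / 2) ^ N) := by
    simpa only [mul_one] using hasSum_half_pow_succ.mul_left ((1 - r) * (1 / 2) ^ N)
  rw [← hsum.sum_add_tsum_nat_add N]
  calc _ ≤ ‖∑ n ∈ Finset.range N, (1 / 2 : ℝ) ^ (n + 1) • c n‖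
        + ‖∑' n, (1 / 2 : ℝ) ^ (n + N + 1) • c (n + N)‖ := norm_add_le _ _
    _ ≤ (1 - (1 / 2) ^ N) + (1 - r) * (1 / 2) ^ N := by
      gcongr
      · rw [← sum_range_half_pow_succ]
        exact norm_sum_le_of_le _ fun n _ =>
          (hterm n).trans (mul_le_of_le_one_right (by positivity) (hc n))
      · exact tsum_of_norm_bounded htail fun n => (hterm _).trans <|
          (mul_le_mul_of_nonneg_left (hcN _ (by omega)) (by positivity)).trans_eq (by ring)
    _ = 1 - r * (1 / 2) ^ N := by ring

omit [T2Space X] in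
lemma exists_mem_apply_eq_norm_apply_le_of_mem_strongBoundaryPoints
    (A : Subspace 𝕂 C(X, E)) (hA : IsClosed (A : Set C(X, E))) {x : X}
    (hx : x ∈ strongBoundaryPoints (A : Set C(X, E))) {U : ℕ → Set X} (hU : ∀ n, U n ∈ nhds x)
    {u : E} (hu : ‖u‖ = 1) {r : ℝ} (hr : r < 1) :
    ∃ g ∈ A, ‖g‖ = 1 ∧ g x = u ∧
      ∀ y N, (∀ n, N ≤ n → y ∉ U n) → ‖g y‖ ≤ 1 - r * (1 / 2) ^ N := by
  choose h hhA hh1 hhx hhU using fun n => hx (U n) (hU n) (1 - r) (sub_pos.2 hr) u hu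
  have hnorm : ∀ n, ‖(1 / 2 : ℝ) ^ (n + 1) • h n‖ = (1 / 2) ^ (n + 1) := fun n => by
    rw [norm_smul, hh1, mul_one, Real.norm_of_nonneg (by positivity)]
  have hsum : Summable fun n => (1 / 2 : ℝ) ^ (n + 1) • h n :=
    .of_norm_bounded hasSum_half_pow_succ.summable fun n => (hnorm n).le
  set g := ∑' n, (1 / 2 : ℝ) ^ (n + 1) • h n
  have hg_apply : ∀ y, g y = ∑' n, (1 / 2 : ℝ) ^ (n + 1) • h n y := fun y =>
    (ContinuousMap.tsum_apply hsum y).symm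
  have hgA : g ∈ A := hA.mem_of_tendsto hsum.hasSum.tendsto_sum_nat <|
    .of_forall fun N => A.sum_mem fun n _ => A.smul_of_tower_mem _ (hhA n)
  have hgx : g x = u := by
    simpa only [hg_apply, hhx, one_smul] using (hasSum_half_pow_succ.smul_const u).tsum_eq
  have hg1 : ‖g‖ = 1 := by
    refine le_antisymm (tsum_of_norm_bounded hasSum_half_pow_succ fun n => (hnorm n).le) ?_
    simpa [hgx, hu] using g.norm_coe_le_norm x
  refine ⟨g, hgA, hg1, hgx, fun y N hy => ?_⟩
  rw [hg_apply]
  exact norm_tsum_half_pow_smul_le (fun n => (h n).norm_coe_le_norm y |>.trans (hh1 n).le)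
    fun n hn => (hhU n y (hy n hn)).le

omit [T2Space X] [CompleteSpace E] in
lemma norm_smul_add_le_one {f g : C(X, E)} {r : ℝ} (hr : 0 ≤ r) (hf : ‖f‖ ≤ 1) (hg : ‖g‖ ≤ 1)
    (hfg : ∀ y N, (∀ n, N ≤ n → (1 / 2 : ℝ) ^ (n + 1) ≤ ‖f y‖) → ‖g y‖ ≤ 1 - r * (1 / 2) ^ N) :
    ‖r • f + g‖ ≤ 1 := by
  refine (ContinuousMap.norm_le _ zero_le_one).2 fun y => ?_
  calc ‖(r • f + g) y‖ ≤ r * ‖f y‖ + ‖g y‖ := by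
        simpa [norm_smul, abs_of_nonneg hr] using norm_add_le (r • f y) (g y)
    _ ≤ 1 := ?_
  rcases (norm_nonneg (f y)).eq_or_lt with hfy | hfy
  · simpa [← hfy] using (g.norm_coe_le_norm y).trans hg
  obtain ⟨N, hNlt, hNle⟩ := exists_nat_pow_near_of_lt_one hfy ((f.norm_coe_le_norm y).trans hf)
    (by norm_num : (0 : ℝ) < 1 / 2) (by norm_num)
  have hgy := hfg y N fun n hn =>
    (pow_le_pow_of_le_one (by norm_num) (by norm_num) (by omega)).trans hNlt.le
  calc r * ‖f y‖ + ‖g y‖ ≤ r * (1 / 2) ^ N + (1 - r * (1 / 2) ^ N) := by gcongr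
    _ = 1 := by ring

/-- Additive Bishop-type lemma: if `x` is a strong boundary point of a closed
subspace `A`, `f ∈ A` with `‖f‖ = 1` and `f x = 0`, then for each unit vector
`u` and each `0 < r < 1` there is `g ∈ V^A_{x,{u}}` with `r • f + g ∈ V^A_{x,{u}}`. -/
theorem stmt5 (A : Subspace 𝕂 C(X, E)) (hA : IsClosed (A : Set C(X, E)))
    (x : X) (hx : x ∈ strongBoundaryPoints (A : Set C(X, E)))
    (f : C(X, E)) (hf : f ∈ A) (hf1 : ‖f‖ = 1) (hfx : f x = 0)
    (u : E) (hu : ‖u‖ = 1) (r : ℝ) (hr0 : 0 < r) (hr1 : r < 1) :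
    ∃ g ∈ Vset A x {u}, r • f + g ∈ Vset A x {u} := by
  have hU : ∀ n : ℕ, {y | ‖f y‖ < (1 / 2 : ℝ) ^ (n + 1)} ∈ nhds x := fun n =>
    (isOpen_lt f.continuous.norm continuous_const).mem_nhds (by simp [hfx])
  obtain ⟨g, hgA, hg1, hgx, hg⟩ :=
    exists_mem_apply_eq_norm_apply_le_of_mem_strongBoundaryPoints A hA hx hU hu hr1
  have hrfgx : (r • f + g) x = u := by simp [hfx, hgx]
  have hrfg1 : ‖r • f + g‖ = 1 := by
    refine le_antisymm (norm_smul_add_le_one hr0.le hf1.le hg1.le fun y N hN =>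
      hg y N fun n hn => (hN n hn).not_gt) ?_
    simpa [hrfgx, hu] using (r • f + g).norm_coe_le_norm x
  exact ⟨g, ⟨hgA, hg1, hgx⟩, A.add_mem (A.smul_of_tower_mem r hf) hgA, hrfg1, hrfgx⟩
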